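/- If an ultrafilter x containing L_n (n ≥ 2) is not irreducible, then there exist i, j < n with i + j = n and ultrafilters x_i ⊇ {L_i}, x_j ⊇ {L_j} (i.e., L_i ∈ x_i and L_j ∈ x_j) such that x = x_i · x_j. -/

import Mathlib

/-- `L n` : positive naturals with exactly `n` prime factors counted with multiplicity. -/
def L (n : ℕ) : Set ℕ+ := {m : ℕ+ | (m : ℕ).primeFactorsList.length = n}

/-- Product of ultrafilters on `ℕ+`: `A ∈ umul x y ↔ {n | {m | n*m ∈ A} ∈ y} ∈ x`. -/
def umul (x y : Ultrafilter ℕ+) : Ultrafilter ℕ+ :=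
  x.bind fun n => y.map fun m => n * m

/-- tilde-divisibility. -/
def tdvd (u v : Ultrafilter ℕ+) : Prop :=
  ∀ A ∈ u, {m : ℕ+ | ∃ a ∈ A, a ∣ m} ∈ v

/-- irreducible ultrafilter. -/
def Irred (p : Ultrafilter ℕ+) : Prop :=
  p ≠ pure 1 ∧ ∀ x y : Ultrafilter ℕ+, p = umul x y → x = pure 1 ∨ y = pure 1

/-!
Write `Ω` for the number of prime factors counted with multiplicity, so that `L n = Ω⁻¹ {n}`
and `Ω (a * b) = Ω a + Ω b`. If `L n ∈ y · z`, then `y`-almost every `a` satisfies `Ω a ≤ n`,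
so some `L i` with `i ≤ n` lies in `y`; for any such `a` with `Ω a = i`, the set of `b` with
`a * b ∈ L n` lies in `z` and is contained in `L (n - i)`. A nontrivial factorisation forces
`i ≠ 0` and `n - i ≠ 0`, because `L 0 = {1}` and so only `pure 1` contains `L 0`.
-/

open ArithmeticFunction Omega

lemma mem_L_iff {m : ℕ+} {n : ℕ} : m ∈ L n ↔ Ω (m : ℕ) = n := by
  rw [cardFactors_apply]
  rfl

lemma mul_mem_L_iff {a b : ℕ+} {n : ℕ} : a * b ∈ L n ↔ Ω (a : ℕ) + Ω (b : ℕ) = n := by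
  rw [mem_L_iff, PNat.mul_coe, cardFactors_mul a.ne_zero b.ne_zero]

lemma L_zero : L 0 = {1} := by
  ext m
  simp [mem_L_iff, cardFactors_eq_zero_iff_eq_zero_or_one, ← PNat.coe_eq_one_iff]

lemma eq_pure_one_of_L_zero_mem {y : Ultrafilter ℕ+} (h : L 0 ∈ y) : y = pure 1 := by
  rw [L_zero] at h
  obtain ⟨a, rfl, hy⟩ := Ultrafilter.eq_pure_of_finite_mem (Set.finite_singleton 1) h
  exact hy

lemma mem_umul {y z : Ultrafilter ℕ+} {A : Set ℕ+} :
    A ∈ umul y z ↔ {a | {b | a * b ∈ A} ∈ z} ∈ y :=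
  Iff.rfl

lemma exists_L_mem_of_L_mem_umul {y z : Ultrafilter ℕ+} {n : ℕ} (h : L n ∈ umul y z) :
    ∃ i ≤ n, L i ∈ y ∧ L (n - i) ∈ z := by
  rw [mem_umul] at h
  have hsub : {a | {b | a * b ∈ L n} ∈ z} ⊆ ⋃ i ∈ Set.Iic n, L i := by
    intro a ha
    obtain ⟨b, hb⟩ := Ultrafilter.nonempty_of_mem ha
    rw [Set.mem_ofPred_eq, mul_mem_L_iff] at hb
    simp only [Set.mem_iUnion, Set.mem_Iic, mem_L_iff]
    exact ⟨_, by omega, rfl⟩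
  obtain ⟨i, hi, hLy⟩ :=
    (Ultrafilter.finite_biUnion_mem_iff (Set.finite_Iic n)).mp (y.mem_of_superset h hsub)
  obtain ⟨a, ha, haL⟩ := Ultrafilter.nonempty_of_mem (Filter.inter_mem h hLy)
  refine ⟨i, hi, hLy, z.mem_of_superset ha ?_⟩
  intro b hb
  rw [Set.mem_ofPred_eq, mul_mem_L_iff] at hb
  rw [mem_L_iff] at haL ⊢
  omega

theorem stmt_8 (n : ℕ) (hn : 2 ≤ n) (x : Ultrafilter ℕ+) (hx : L n ∈ x)
    (hirr : ¬ Irred x) :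
    ∃ i j : ℕ, i < n ∧ j < n ∧ i + j = n ∧
      ∃ xi xj : Ultrafilter ℕ+, L i ∈ xi ∧ L j ∈ xj ∧ x = umul xi xj := by
  simp only [Irred, not_and_or, not_not, not_forall, not_or] at hirr
  rcases hirr with rfl | ⟨y, z, rfl, hy, hz⟩
  · rw [Ultrafilter.mem_pure, mem_L_iff, PNat.one_coe, cardFactors_one] at hx
    omega
  · obtain ⟨i, hin, hLy, hLz⟩ := exists_L_mem_of_L_mem_umul hx
    have hi : i ≠ 0 := fun h => hy (eq_pure_one_of_L_zero_mem (h ▸ hLy))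
    have hni : n - i ≠ 0 := fun h => hz (eq_pure_one_of_L_zero_mem (h ▸ hLz))
    exact ⟨i, n - i, by omega, by omega, by omega, y, z, hLy, hLz, rfl⟩
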